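/- A sequence (μ_n)_{n≥1} of Borel probability measures on ℝ converges weakly to a Borel probability measure μ on ℝ if and only if for every z ∈ ℂ with Im(z) ≥ 1 one has lim_{n→∞} G_{μ_n}(z) = G_μ(z). -/

import Mathlib

open MeasureTheory Filter
open scoped ENNReal Topology

noncomputable section

/-- The distance `k`-graph of a graph: same vertices, edges between vertices at distance `k`. -/
def distGraph {W : Type*} (H : SimpleGraph W) (k : ℕ) : SimpleGraph W where
  Adj x y := x ≠ y ∧ H.dist x y = k
  symm := ⟨fun x y h => ⟨h.1.symm, by rw [SimpleGraph.dist_comm]; exact h.2⟩⟩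
  loopless := ⟨fun x h => h.1 rfl⟩

/-- Vertex set of the `N`-fold star power of a graph rooted at `e`:
the common root `none`, plus `N` copies of the non-root vertices. -/
abbrev StarVert (V : Type*) (e : V) (N : ℕ) := Option (Fin N × {v : V // v ≠ e})

def starAdj {V : Type*} (G : SimpleGraph V) (e : V) (N : ℕ) :
    StarVert V e N → StarVert V e N → Prop
  | none, none => False
  | none, some q => G.Adj e q.2.1
  | some p, none => G.Adj p.2.1 e
  | some p, some q => p.1 = q.1 ∧ G.Adj p.2.1 q.2.1

/-- The `N`-fold star power of a rooted graph `(G, e)`: `N` copies of `G` glued at `e`. -/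
def starPower {V : Type*} (G : SimpleGraph V) (e : V) (N : ℕ) :
    SimpleGraph (StarVert V e N) where
  Adj := starAdj G e N
  symm := by
    constructor
    rintro (_ | p) (_ | q) h
    · exact h.elim
    · exact h.symm
    · exact h.symm
    · exact ⟨h.1.symm, h.2.symm⟩
  loopless := by
    constructor
    rintro (_ | p) h
    · exact h.elim
    · exact G.loopless.irrefl _ h.2

/-- The vertex of the `i`-th copy of `G` in the `N`-fold star power corresponding to `v ∈ G`. -/
def rootedEmbed {V : Type*} [DecidableEq V] (e : V) (N : ℕ) (i : Fin N) (v : V) :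
    StarVert V e N :=
  if h : v = e then none else some (i, ⟨v, h⟩)

open scoped Classical in
/-- The real adjacency matrix of a graph. -/
def adjMat {W : Type*} [Fintype W] (H : SimpleGraph W) : Matrix W W ℝ :=
  fun x y => if H.Adj x y then 1 else 0

/-- The centered Bernoulli distribution `(1/2)δ_{-1} + (1/2)δ_1`. -/
def bern : Measure ℝ := (1/2 : ℝ≥0∞) • Measure.dirac (-1) + (1/2 : ℝ≥0∞) • Measure.dirac 1

/-- The Cauchy transform of a measure on `ℝ`. -/
def cauchyT (μ : Measure ℝ) (z : ℂ) : ℂ := ∫ x, (z - (x : ℂ))⁻¹ ∂μ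

/-- The distance `d(μ₁,μ₂) = sup_{Im z ≥ 1} |G_{μ₁}(z) - G_{μ₂}(z)|`. -/
def cdist (μ₁ μ₂ : Measure ℝ) : ℝ :=
  ⨆ z : {z : ℂ // 1 ≤ z.im}, ‖cauchyT μ₁ z - cauchyT μ₂ z‖



/-!
The Cauchy kernel `x ↦ (z - x)⁻¹` is bounded and continuous off the real axis, so weak convergence
gives convergence of the Cauchy transforms. Conversely, the identity
`∫ x² / (x² + r²) dρ = 1 + r Im G_ρ(ir)` controls the tails `ρ {r < |x|}`, so convergence on the
imaginary axis makes the sequence tight. By Prokhorov it then suffices to have convergence of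
`∫ g` for every `g` in the point-separating star algebra generated by the kernels with
`|Im z| ≥ 1`. That algebra lies in the closure of the span of the kernels and `1`, on which the
integrals do converge: two distinct kernels multiply by partial fractions,
`(z - x)⁻¹ (w - x)⁻¹ = ((z - x)⁻¹ - (w - x)⁻¹) / (w - z)`, and a square is the uniform limit of
the products at `z` and `z + h`.
-/

open BoundedContinuousFunction Complex ComplexConjugate

theorem Submodule.mul_mem_topologicalClosure_span {R B : Type*} [CommSemiring R] [Semiring B]
    [Algebra R B] [TopologicalSpace B] [IsTopologicalSemiring B] {s : Set B}
    (hs : ∀ a ∈ s, ∀ b ∈ s, a * b ∈ (Submodule.span R s).topologicalClosure)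
    {a b : B} (ha : a ∈ (Submodule.span R s).topologicalClosure)
    (hb : b ∈ (Submodule.span R s).topologicalClosure) :
    a * b ∈ (Submodule.span R s).topologicalClosure := by
  set W := (Submodule.span R s).topologicalClosure
  have hspan : ∀ a ∈ Submodule.span R s, ∀ b ∈ Submodule.span R s, a * b ∈ W := by
    intro a ha b hb
    have : Submodule.span R s * Submodule.span R s ≤ W := by
      rw [Submodule.span_mul_span, Submodule.span_le]
      rintro _ ⟨a, ha, b, hb, rfl⟩
      exact hs a ha b hb
    exact this (Submodule.mul_mem_mul ha hb)
  exact (Submodule.span R s).isClosed_topologicalClosure.closure_subset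
    (map_mem_closure₂ (u := W) continuous_mul ha hb hspan)

section IntegralTendsto

variable {X ι : Type*} [TopologicalSpace X] [MeasurableSpace X] [OpensMeasurableSpace X]

def tendstoIntegralSubmodule (μ : ι → Measure X) [∀ i, IsFiniteMeasure (μ i)] (l : Filter ι)
    (ν : Measure X) [IsFiniteMeasure ν] : Submodule ℂ (X →ᵇ ℂ) where
  carrier := {g | Tendsto (fun i => ∫ x, g x ∂μ i) l (𝓝 (∫ x, g x ∂ν))}
  add_mem' {g h} hg hh := by
    simpa only [Set.mem_ofPred_eq, coe_add, Pi.add_apply,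
      integral_add (g.integrable _) (h.integrable _)] using hg.add hh
  zero_mem' := by simpa using tendsto_const_nhds
  smul_mem' c g hg := by
    simpa only [Set.mem_ofPred_eq, BoundedContinuousFunction.coe_smul, integral_smul]
      using hg.const_smul c

@[simp]
theorem mem_tendstoIntegralSubmodule {μ : ι → Measure X} [∀ i, IsFiniteMeasure (μ i)]
    {l : Filter ι} {ν : Measure X} [IsFiniteMeasure ν] {g : X →ᵇ ℂ} :
    g ∈ tendstoIntegralSubmodule μ l ν ↔
      Tendsto (fun i => ∫ x, g x ∂μ i) l (𝓝 (∫ x, g x ∂ν)) :=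
  Iff.rfl

theorem lipschitzWith_integral (μ : Measure X) [IsProbabilityMeasure μ] :
    LipschitzWith 1 fun g : X →ᵇ ℂ => ∫ x, g x ∂μ :=
  LipschitzWith.of_dist_le_mul fun g h => by
    rw [NNReal.coe_one, one_mul, dist_eq_norm, dist_eq_norm,
      ← integral_sub (g.integrable μ) (h.integrable μ)]
    exact (g - h).norm_integral_le_norm μ

theorem isClosed_tendstoIntegralSubmodule (μ : ι → Measure X) [∀ i, IsProbabilityMeasure (μ i)]
    (l : Filter ι) (ν : Measure X) [IsProbabilityMeasure ν] :
    IsClosed (tendstoIntegralSubmodule μ l ν : Set (X →ᵇ ℂ)) :=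
  Equicontinuous.isClosed_setOfPred_tendsto
    (LipschitzWith.uniformEquicontinuous _ 1 fun i => lipschitzWith_integral (μ i)).equicontinuous
    (lipschitzWith_integral ν).continuous

end IntegralTendsto

theorem Complex.sub_ofReal_ne_zero {z : ℂ} (hz : z.im ≠ 0) (x : ℝ) : z - x ≠ 0 :=
  fun h => hz (by simpa using congrArg Complex.im h)

theorem Complex.norm_inv_sub_ofReal_le {z : ℂ} (hz : z.im ≠ 0) (x : ℝ) :
    ‖(z - x)⁻¹‖ ≤ |z.im|⁻¹ := by
  rw [norm_inv]
  have h := Complex.abs_im_le_norm (z - x)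
  rw [sub_im, ofReal_im, sub_zero] at h
  exact inv_anti₀ (abs_pos.2 hz) h

def cauchyKernel (z : ℂ) : ℝ →ᵇ ℂ :=
  if hz : z.im = 0 then 0 else
    .ofNormedAddCommGroup (fun x : ℝ => (z - x)⁻¹)
      ((continuous_const.sub continuous_ofReal).inv₀ (sub_ofReal_ne_zero hz)) |z.im|⁻¹
      (norm_inv_sub_ofReal_le hz)

theorem cauchyKernel_apply {z : ℂ} (hz : z.im ≠ 0) (x : ℝ) : cauchyKernel z x = (z - x)⁻¹ := by
  simp [cauchyKernel, hz]

theorem star_cauchyKernel (z : ℂ) : star (cauchyKernel z) = cauchyKernel (conj z) := by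
  by_cases hz : z.im = 0
  · simp [cauchyKernel, hz]
  · ext x
    have hz' : (conj z).im ≠ 0 := by simpa using hz
    rw [BoundedContinuousFunction.star_apply, cauchyKernel_apply hz, cauchyKernel_apply hz']
    simp

theorem cauchyT_eq_integral_cauchyKernel (μ : Measure ℝ) {z : ℂ} (hz : z.im ≠ 0) :
    cauchyT μ z = ∫ x, cauchyKernel z x ∂μ := by
  simp only [cauchyT, cauchyKernel_apply hz]

theorem cauchyKernel_mul_cauchyKernel {z w : ℂ} (hz : z.im ≠ 0) (hw : w.im ≠ 0) (hzw : z ≠ w) :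
    cauchyKernel z * cauchyKernel w = (w - z)⁻¹ • (cauchyKernel z - cauchyKernel w) := by
  ext x
  have := sub_ofReal_ne_zero hz x
  have := sub_ofReal_ne_zero hw x
  have : w - z ≠ 0 := sub_ne_zero.2 hzw.symm
  simp only [BoundedContinuousFunction.coe_mul, BoundedContinuousFunction.coe_smul,
    BoundedContinuousFunction.coe_sub, Pi.mul_apply, Pi.sub_apply, smul_eq_mul,
    cauchyKernel_apply hz, cauchyKernel_apply hw]
  field_simp
  ring

theorem norm_cauchyKernel_add_ofReal_sub_le {z : ℂ} (hz : z.im ≠ 0) (h : ℝ) :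
    ‖cauchyKernel (z + h) - cauchyKernel z‖ ≤ |h| / z.im ^ 2 := by
  have hzh : (z + h).im ≠ 0 := by simpa using hz
  refine (BoundedContinuousFunction.norm_le (by positivity)).2 fun x => ?_
  have hdiff : (z + h - x)⁻¹ - (z - x)⁻¹ = -h * ((z + h - x)⁻¹ * (z - x)⁻¹) := by
    rw [inv_sub_inv (sub_ofReal_ne_zero hzh x) (sub_ofReal_ne_zero hz x)]
    field_simp
    ring
  rw [BoundedContinuousFunction.coe_sub, Pi.sub_apply, cauchyKernel_apply hzh,
    cauchyKernel_apply hz, hdiff, norm_mul, norm_mul, norm_neg, norm_real, Real.norm_eq_abs, div_eq_mul_inv,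
    ← sq_abs, pow_two, mul_inv]
  have h1 := norm_inv_sub_ofReal_le hzh x
  have h2 := norm_inv_sub_ofReal_le hz x
  rw [add_im, ofReal_im, add_zero] at h1
  gcongr

theorem tendsto_cauchyKernel_add_ofReal {z : ℂ} (hz : z.im ≠ 0) :
    Tendsto (fun h : ℝ => cauchyKernel (z + h)) (𝓝 0) (𝓝 (cauchyKernel z)) := by
  refine tendsto_iff_norm_sub_tendsto_zero.2 <| squeeze_zero (fun _ => norm_nonneg _)
    (norm_cauchyKernel_add_ofReal_sub_le hz) ?_
  simpa using (continuous_abs.tendsto (0 : ℝ)).div_const (z.im ^ 2)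

def offAxis : Set ℂ := {z | 1 ≤ |z.im|}

theorem im_ne_zero_of_mem_offAxis {z : ℂ} (hz : z ∈ offAxis) : z.im ≠ 0 :=
  abs_pos.1 (one_pos.trans_le hz)

theorem add_ofReal_mem_offAxis {z : ℂ} (hz : z ∈ offAxis) (h : ℝ) : z + h ∈ offAxis := by
  simpa [offAxis] using hz

def cauchyKernelSpan : Submodule ℂ (ℝ →ᵇ ℂ) :=
  Submodule.span ℂ (insert 1 (cauchyKernel '' offAxis))

theorem cauchyKernel_mul_cauchyKernel_mem_closure {z w : ℂ} (hz : z ∈ offAxis)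
    (hw : w ∈ offAxis) : cauchyKernel z * cauchyKernel w ∈ cauchyKernelSpan.topologicalClosure := by
  have mem_span {z w : ℂ} (hz : z ∈ offAxis) (hw : w ∈ offAxis) (hzw : z ≠ w) :
      cauchyKernel z * cauchyKernel w ∈ cauchyKernelSpan := by
    rw [cauchyKernel_mul_cauchyKernel (im_ne_zero_of_mem_offAxis hz)
      (im_ne_zero_of_mem_offAxis hw) hzw]
    exact Submodule.smul_mem _ _ (Submodule.sub_mem _
      (Submodule.subset_span (.inr ⟨z, hz, rfl⟩)) (Submodule.subset_span (.inr ⟨w, hw, rfl⟩)))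
  rcases ne_or_eq z w with hzw | rfl
  · exact Submodule.le_topologicalClosure _ (mem_span hz hw hzw)
  -- the square is the limit of products at distinct nodes `z` and `z + h`
  refine mem_closure_of_tendsto (f := fun h : ℝ => cauchyKernel z * cauchyKernel (z + h))
    (b := 𝓝[≠] 0) ((tendsto_cauchyKernel_add_ofReal (im_ne_zero_of_mem_offAxis hz)).const_mul
      _ |>.mono_left nhdsWithin_le_nhds) ?_
  filter_upwards [self_mem_nhdsWithin] with h hh
  refine mem_span hz (add_ofReal_mem_offAxis hz h) ?_
  simpa using hh

theorem star_cauchyKernel_image_offAxis_subset :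
    star (cauchyKernel '' offAxis) ⊆ cauchyKernel '' offAxis := by
  rintro g ⟨z, hz, hzg⟩
  refine ⟨conj z, by simpa [offAxis] using hz, ?_⟩
  rw [← star_cauchyKernel, hzg, star_star]

theorem mul_mem_closure_cauchyKernelSpan {g h : ℝ →ᵇ ℂ}
    (hg : g ∈ cauchyKernelSpan.topologicalClosure) (hh : h ∈ cauchyKernelSpan.topologicalClosure) :
    g * h ∈ cauchyKernelSpan.topologicalClosure := by
  refine Submodule.mul_mem_topologicalClosure_span ?_ hg hh
  rintro a (rfl | ⟨z, hz, rfl⟩) b (rfl | ⟨w, hw, rfl⟩)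
  · exact Submodule.le_topologicalClosure _ (Submodule.subset_span (by simp))
  · rw [one_mul]
    exact Submodule.le_topologicalClosure _ (Submodule.subset_span (.inr ⟨w, hw, rfl⟩))
  · rw [mul_one]
    exact Submodule.le_topologicalClosure _ (Submodule.subset_span (.inr ⟨z, hz, rfl⟩))
  · exact cauchyKernel_mul_cauchyKernel_mem_closure hz hw

theorem starAlgebra_adjoin_cauchyKernel_subset :
    (StarAlgebra.adjoin ℂ (cauchyKernel '' offAxis) : Set (ℝ →ᵇ ℂ)) ⊆
      cauchyKernelSpan.topologicalClosure := by
  intro g hg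
  rw [SetLike.mem_coe, ← StarSubalgebra.mem_toSubalgebra, StarAlgebra.adjoin_toSubalgebra,
    Set.union_eq_left.2 star_cauchyKernel_image_offAxis_subset] at hg
  induction hg using Algebra.adjoin_induction with
  | mem g hg => exact Submodule.le_topologicalClosure _ (Submodule.subset_span (.inr hg))
  | algebraMap c =>
    rw [Algebra.algebraMap_eq_smul_one]
    exact Submodule.smul_mem _ c
      (Submodule.le_topologicalClosure _ (Submodule.subset_span (by simp)))
  | add g h _ _ hg hh => exact add_mem hg hh
  | mul g h _ _ hg hh => exact mul_mem_closure_cauchyKernelSpan hg hh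

section Convergence

variable {ι : Type*} {l : Filter ι} {μ : ι → Measure ℝ} [∀ i, IsProbabilityMeasure (μ i)]
  {ν : Measure ℝ} [IsProbabilityMeasure ν]

theorem cauchyKernel_mem_tendstoIntegralSubmodule
    (h : ∀ z : ℂ, 1 ≤ z.im → Tendsto (fun i => cauchyT (μ i) z) l (𝓝 (cauchyT ν z)))
    {z : ℂ} (hz : z ∈ offAxis) : cauchyKernel z ∈ tendstoIntegralSubmodule μ l ν := by
  have of_one_le_im {z : ℂ} (hz : 1 ≤ z.im) :
      cauchyKernel z ∈ tendstoIntegralSubmodule μ l ν := by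
    have hz0 : z.im ≠ 0 := by positivity
    simpa only [mem_tendstoIntegralSubmodule, cauchyT_eq_integral_cauchyKernel _ hz0] using h z hz
  rcases le_abs'.1 (show 1 ≤ |z.im| from hz) with hneg | hpos
  · have hconj : 1 ≤ (conj z).im := by rw [conj_im]; linarith
    rw [← star_star (cauchyKernel z), star_cauchyKernel]
    have := (continuous_conj.tendsto _).comp (of_one_le_im hconj)
    simpa only [mem_tendstoIntegralSubmodule, BoundedContinuousFunction.star_apply,
      Complex.star_def, Function.comp_def, integral_conj] using this
  · exact of_one_le_im hpos

theorem closure_cauchyKernelSpan_le_tendstoIntegralSubmodule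
    (h : ∀ z : ℂ, 1 ≤ z.im → Tendsto (fun i => cauchyT (μ i) z) l (𝓝 (cauchyT ν z))) :
    cauchyKernelSpan.topologicalClosure ≤ tendstoIntegralSubmodule μ l ν := by
  refine Submodule.topologicalClosure_minimal _ (Submodule.span_le.2 ?_)
    (isClosed_tendstoIntegralSubmodule μ l ν)
  rintro _ (rfl | ⟨z, hz, rfl⟩)
  · simpa using tendsto_const_nhds
  · exact cauchyKernel_mem_tendstoIntegralSubmodule h hz

end Convergence

section Tightness

theorem sq_div_sq_add_sq_eq_one_add_im_inv (x : ℝ) {r : ℝ} (hr : r ≠ 0) :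
    x ^ 2 / (x ^ 2 + r ^ 2) = 1 + r * ((r * I - x)⁻¹).im := by
  have hre : (r * I - x).re = -x := by simp
  have him : (r * I - x).im = r := by simp
  rw [inv_im, normSq_apply, hre, him]
  field_simp
  ring

theorem integrable_sq_div_sq_add_sq (ρ : Measure ℝ) [IsFiniteMeasure ρ] (r : ℝ) :
    Integrable (fun x : ℝ => x ^ 2 / (x ^ 2 + r ^ 2)) ρ := by
  refine (integrable_const 1).mono' (by fun_prop : Measurable _).aestronglyMeasurable
    (ae_of_all _ fun x => ?_)
  rw [Real.norm_of_nonneg (by positivity)]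
  exact div_le_one_of_le₀ (by nlinarith [sq_nonneg r]) (by positivity)

theorem integral_sq_div_sq_add_sq (ρ : Measure ℝ) [IsProbabilityMeasure ρ] {r : ℝ} (hr : r ≠ 0) :
    ∫ x, x ^ 2 / (x ^ 2 + r ^ 2) ∂ρ = 1 + r * (cauchyT ρ (r * I)).im := by
  have hrI : (r * I).im ≠ 0 := by simpa using hr
  have hint := (cauchyKernel (r * I)).integrable ρ
  have him : (∫ x, cauchyKernel (r * I) x ∂ρ).im = ∫ x, (cauchyKernel (r * I) x).im ∂ρ :=
    (integral_im hint).symm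
  rw [cauchyT_eq_integral_cauchyKernel ρ hrI, him]
  simp_rw [sq_div_sq_add_sq_eq_one_add_im_inv _ hr, cauchyKernel_apply hrI]
  have hint' : Integrable (fun x : ℝ => ((r * I - x)⁻¹).im) ρ := by
    have := hint.im
    simp only [cauchyKernel_apply hrI] at this
    exact this
  rw [integral_add (integrable_const 1) (hint'.const_mul r), integral_const_mul]
  simp

theorem measure_lt_abs_le_integral (ρ : Measure ℝ) [IsFiniteMeasure ρ] {r : ℝ} (hr : 0 < r) :
    ρ {x | r < |x|} ≤ ENNReal.ofReal (2 * ∫ x, x ^ 2 / (x ^ 2 + r ^ 2) ∂ρ) := by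
  have hsub : {x : ℝ | r < |x|} ⊆ {x | 1 / 2 ≤ x ^ 2 / (x ^ 2 + r ^ 2)} := by
    intro x hx
    have : r ^ 2 < x ^ 2 := sq_lt_sq.2 (by rwa [abs_of_pos hr])
    simp only [Set.mem_ofPred_eq]
    rw [div_le_div_iff₀ two_pos (by positivity)]
    linarith
  have markov := mul_meas_ge_le_integral_of_nonneg (ae_of_all _ fun x => by positivity)
    (integrable_sq_div_sq_add_sq ρ r) (1 / 2)
  calc ρ {x | r < |x|} ≤ ρ {x | 1 / 2 ≤ x ^ 2 / (x ^ 2 + r ^ 2)} := measure_mono hsub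
    _ = ENNReal.ofReal (ρ.real {x | 1 / 2 ≤ x ^ 2 / (x ^ 2 + r ^ 2)}) := (ofReal_measureReal).symm
    _ ≤ _ := ENNReal.ofReal_le_ofReal (by linarith)

theorem tendsto_integral_sq_div_sq_add_sq (ρ : Measure ℝ) [IsFiniteMeasure ρ] :
    Tendsto (fun r : ℝ => ∫ x, x ^ 2 / (x ^ 2 + r ^ 2) ∂ρ) atTop (𝓝 0) := by
  have hbound : ∀ r x : ℝ, ‖x ^ 2 / (x ^ 2 + r ^ 2)‖ ≤ 1 := fun r x => by
    rw [Real.norm_of_nonneg (by positivity)]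
    exact div_le_one_of_le₀ (by nlinarith [sq_nonneg r]) (by positivity)
  simpa using tendsto_integral_filter_of_dominated_convergence (fun _ => 1)
    (.of_forall fun r => (by fun_prop : Measurable _).aestronglyMeasurable)
    (.of_forall fun r => ae_of_all _ (hbound r)) (integrable_const 1)
    (ae_of_all _ fun x => tendsto_const_nhds.div_atTop
      (tendsto_atTop_add_const_left _ _ (tendsto_pow_atTop two_ne_zero)))

theorem isTightMeasureSet_range_of_tendsto_cauchyT {μ : ℕ → Measure ℝ}
    [∀ n, IsProbabilityMeasure (μ n)] {ν : Measure ℝ} [IsProbabilityMeasure ν]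
    (h : ∀ r : ℝ, 1 ≤ r → Tendsto (fun n => cauchyT (μ n) (r * I)) atTop (𝓝 (cauchyT ν (r * I)))) :
    IsTightMeasureSet (Set.range μ) := by
  set tail : Measure ℝ → ℝ → ℝ≥0∞ := fun ρ r => ENNReal.ofReal (2 * ∫ x, x ^ 2 / (x ^ 2 + r ^ 2) ∂ρ)
  have hlimsup : ∀ r : ℝ, 1 ≤ r → limsup (fun n => μ n {x | r < ‖x‖}) atTop ≤ tail ν r := by
    intro r hr
    have hr0 : r ≠ 0 := by positivity
    have hconv : Tendsto (fun n => tail (μ n) r) atTop (𝓝 (tail ν r)) := by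
      simp only [tail, integral_sq_div_sq_add_sq _ hr0]
      exact (ENNReal.continuous_ofReal.tendsto _).comp
        (((continuous_im.tendsto _).comp (h r hr)).const_mul r |>.const_add 1 |>.const_mul 2)
    calc limsup (fun n => μ n {x | r < ‖x‖}) atTop ≤ limsup (fun n => tail (μ n) r) atTop :=
          limsup_le_limsup (.of_forall fun n => by
            simpa only [Real.norm_eq_abs] using measure_lt_abs_le_integral (μ n) (by positivity))
      _ = tail ν r := hconv.limsup_eq
  have htail : Tendsto (tail ν) atTop (𝓝 0) := by
    simpa [tail, Function.comp_def] using (ENNReal.continuous_ofReal.tendsto _).comp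
      ((tendsto_integral_sq_div_sq_add_sq ν).const_mul 2)
  exact isTightMeasureSet_range_of_tendsto_limsup_measure_norm_gt
    (tendsto_of_tendsto_of_tendsto_of_le_of_le' tendsto_const_nhds htail
      (.of_forall fun _ => zero_le) ((eventually_ge_atTop 1).mono hlimsup))

end Tightness

theorem separatesPoints_map_adjoin_cauchyKernel :
    ((StarAlgebra.adjoin ℂ (cauchyKernel '' offAxis)).map
      (toContinuousMapStarₐ ℂ)).SeparatesPoints := by
  intro x y hxy
  have hI : I ∈ offAxis := by simp [offAxis]
  refine ⟨cauchyKernel I, ⟨_, ⟨cauchyKernel I,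
    StarAlgebra.subset_adjoin ℂ _ ⟨I, hI, rfl⟩, rfl⟩, rfl⟩, ?_⟩
  have hI0 : I.im ≠ 0 := by simp
  simpa [cauchyKernel_apply hI0] using hxy

theorem tendsto_cauchyT_of_tendsto {ι : Type*} {l : Filter ι} {P : ι → ProbabilityMeasure ℝ}
    {P₀ : ProbabilityMeasure ℝ} (h : Tendsto P l (𝓝 P₀)) {z : ℂ} (hz : z.im ≠ 0) :
    Tendsto (fun i => cauchyT (P i) z) l (𝓝 (cauchyT P₀ z)) := by
  simpa only [cauchyT_eq_integral_cauchyKernel _ hz] using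
    (ProbabilityMeasure.tendsto_iff_forall_integral_rclike_tendsto ℂ).1 h (cauchyKernel z)

theorem tendsto_of_tendsto_cauchyT {P : ℕ → ProbabilityMeasure ℝ} {P₀ : ProbabilityMeasure ℝ}
    (h : ∀ z : ℂ, 1 ≤ z.im → Tendsto (fun n => cauchyT (P n) z) atTop (𝓝 (cauchyT P₀ z))) :
    Tendsto P atTop (𝓝 P₀) := by
  have htight : IsTightMeasureSet (Set.range fun n => (P n : Measure ℝ)) :=
    isTightMeasureSet_range_of_tendsto_cauchyT fun r hr => h _ (by simpa using hr)
  refine ProbabilityMeasure.tendsto_of_tight_of_separatesPoints ℂ htight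
    separatesPoints_map_adjoin_cauchyKernel fun g hg => ?_
  exact closure_cauchyKernelSpan_le_tendstoIntegralSubmodule h
    (starAlgebra_adjoin_cauchyKernel_subset hg)

/-- Weak convergence of probability measures on `ℝ` is equivalent to pointwise
convergence of the Cauchy transforms on `{z : Im z ≥ 1}`. -/
theorem weak_convergence_iff_cauchy_transform
    (μ : ℕ → Measure ℝ) (ν : Measure ℝ)
    (hμ : ∀ n, IsProbabilityMeasure (μ n)) (hν : IsProbabilityMeasure ν) :
    (∀ f : BoundedContinuousFunction ℝ ℝ,
        Tendsto (fun n => ∫ x, f x ∂(μ n)) atTop (𝓝 (∫ x, f x ∂ν))) ↔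
    (∀ z : ℂ, 1 ≤ z.im → Tendsto (fun n => cauchyT (μ n) z) atTop (𝓝 (cauchyT ν z))) := by
  let P : ℕ → ProbabilityMeasure ℝ := fun n => ⟨μ n, hμ n⟩
  let P₀ : ProbabilityMeasure ℝ := ⟨ν, hν⟩
  exact (ProbabilityMeasure.tendsto_iff_forall_integral_tendsto (μs := P) (μ := P₀)).symm.trans
    ⟨fun h z hz => tendsto_cauchyT_of_tendsto h (by positivity),
      fun h => tendsto_of_tendsto_cauchyT (P := P) (P₀ := P₀) h⟩

end
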